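/- Let A be a quasitriangular bialgebra over a field F with R-matrix R and let υ be a bialgebra automorphism of A such that (υ⊗υ)(R) = R (an automorphism of quasitriangular bialgebras). Then both (υ, R) and (υ, (R₂₁)⁻¹) are twist pairs for A. -/

import Mathlib

open TensorProduct

noncomputable section

variable (F : Type*) [Field F]

section BialgDefs

variable (A : Type*) [Ring A] [Bialgebra F A]

/-- Conjugation by an invertible element, as an algebra automorphism. -/
def conjEquiv (g gi : A) (h1 : g * gi = 1) (h2 : gi * g = 1) : A ≃ₐ[F] A where
  toFun a := g * a * gi
  invFun a := gi * a * g
  left_inv a := by simp only [← mul_assoc]; rw [h2, one_mul, mul_assoc, h2, mul_one]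
  right_inv a := by simp only [← mul_assoc]; rw [h1, one_mul, mul_assoc, h1, mul_one]
  map_mul' a b := by
    show g * (a * b) * gi = (g * a * gi) * (g * b * gi)
    simp only [mul_assoc]; rw [← mul_assoc gi g, h2, one_mul]
  map_add' a b := by
    show g * (a + b) * gi = g * a * gi + g * b * gi
    rw [mul_add, add_mul]
  commutes' r := by
    show g * algebraMap F A r * gi = algebraMap F A r
    rw [← Algebra.commutes r g, mul_assoc, h1, mul_one]

/-- The coproduct of `A`, as an algebra map. -/
def cop : A →ₐ[F] A ⊗[F] A := Bialgebra.comulAlgHom F A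

/-- The flip of the two tensor legs. -/
def flipT : (A ⊗[F] A) ≃ₐ[F] A ⊗[F] A := Algebra.TensorProduct.comm F A A

/-- The opposite coproduct. -/
def copOp : A →ₐ[F] A ⊗[F] A := (flipT F A).toAlgHom.comp (cop F A)

/-- `X ↦ X₁₂` on triple tensors. -/
def i12 : (A ⊗[F] A) →ₐ[F] A ⊗[F] (A ⊗[F] A) :=
  Algebra.TensorProduct.map (AlgHom.id F A) Algebra.TensorProduct.includeLeft

/-- `X ↦ X₁₃` on triple tensors. -/
def i13 : (A ⊗[F] A) →ₐ[F] A ⊗[F] (A ⊗[F] A) :=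
  Algebra.TensorProduct.map (AlgHom.id F A) Algebra.TensorProduct.includeRight

/-- `X ↦ X₂₃` on triple tensors. -/
def i23 : (A ⊗[F] A) →ₐ[F] A ⊗[F] (A ⊗[F] A) :=
  Algebra.TensorProduct.includeRight

/-- `Δ ⊗ id` landing in `A ⊗ (A ⊗ A)`. -/
def cop12 : (A ⊗[F] A) →ₐ[F] A ⊗[F] (A ⊗[F] A) :=
  (Algebra.TensorProduct.assoc F F F A A A).toAlgHom.comp
    (Algebra.TensorProduct.map (cop F A) (AlgHom.id F A))

/-- `id ⊗ Δ`. -/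
def cop23 : (A ⊗[F] A) →ₐ[F] A ⊗[F] (A ⊗[F] A) :=
  Algebra.TensorProduct.map (AlgHom.id F A) (cop F A)

/-- `ε ⊗ id`. -/
def counit2l : (A ⊗[F] A) →ₐ[F] A :=
  (Algebra.TensorProduct.lid F A).toAlgHom.comp
    (Algebra.TensorProduct.map (Bialgebra.counitAlgHom F A) (AlgHom.id F A))

/-- `id ⊗ ε`. -/
def counit2r : (A ⊗[F] A) →ₐ[F] A :=
  (Algebra.TensorProduct.rid F F A).toAlgHom.comp
    (Algebra.TensorProduct.map (AlgHom.id F A) (Bialgebra.counitAlgHom F A))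

/-- `ψ ⊗ φ` on `A ⊗ A`. -/
def mapT (ψ φ : A →ₐ[F] A) : (A ⊗[F] A) →ₐ[F] A ⊗[F] A := Algebra.TensorProduct.map ψ φ

/-- `R^ψ = (ψ ⊗ id)(R)`. -/
def rpsi (R : A ⊗[F] A) (ψ : A ≃ₐ[F] A) : A ⊗[F] A :=
  Algebra.TensorProduct.map ψ.toAlgHom (AlgHom.id F A) R

/-- `A` is quasitriangular with R-matrix `R` (with inverse `Ri`). -/
structure IsQT (R Ri : A ⊗[F] A) : Prop where
  mulInv : R * Ri = 1
  invMul : Ri * R = 1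
  intw : ∀ a : A, R * cop F A a * Ri = copOp F A a
  copL : cop12 F A R = i13 F A R * i23 F A R
  copR : cop23 F A R = i13 F A R * i12 F A R

/-- `(ψ, J)` is a twist pair (with `Ji` the inverse of `J`). -/
structure IsTwistPair (R Ri J Ji : A ⊗[F] A) (ψ : A ≃ₐ[F] A) : Prop where
  mulInv : J * Ji = 1
  invMul : Ji * J = 1
  cocycle : i12 F A J * cop12 F A J = i23 F A J * cop23 F A J
  counitL : counit2l F A J = 1
  counitR : counit2r F A J = 1
  intw : ∀ a : A,
    mapT F A ψ.toAlgHom ψ.toAlgHom (copOp F A (ψ.symm a)) = J * cop F A a * Ji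
  rrel : flipT F A (mapT F A ψ.toAlgHom ψ.toAlgHom R) = flipT F A J * R * Ji

/-- The image of `s ⊗ A` inside `A ⊗ A`, for a subset `s ⊆ A`. -/
def legSpan (s : Set A) : Submodule F (A ⊗[F] A) :=
  Submodule.span F {x : A ⊗[F] A | ∃ b ∈ s, ∃ a : A, x = b ⊗ₜ[F] a}

/-- `B` is a right coideal subalgebra of `A`. -/
def IsRightCoideal (B : Subalgebra F A) : Prop :=
  ∀ b ∈ B, cop F A b ∈ legSpan F A (B : Set A)

/-- The tensor K-matrix `𝕂 = (R^ψ)₂₁ ⬝ (1 ⊗ K) ⬝ R`. -/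
def tenK (R : A ⊗[F] A) (ψ : A ≃ₐ[F] A) (K : A) : A ⊗[F] A :=
  flipT F A (rpsi F A R ψ) * ((1 : A) ⊗ₜ[F] K) * R

/-- `(ψ, J, K)` is a cylindrical structure on `(A, B)`. -/
structure IsCylindrical (R Ri : A ⊗[F] A) (B : Subalgebra F A) (J Ji : A ⊗[F] A)
    (ψ : A ≃ₐ[F] A) (K Kinv : A) : Prop where
  twist : IsTwistPair F A R Ri J Ji ψ
  kMulInv : K * Kinv = 1
  kInvMul : Kinv * K = 1
  intwB : ∀ b ∈ B, K * b * Kinv = ψ b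
  support : tenK F A R ψ K ∈ legSpan F A (B : Set A)
  copK : cop F A K = Ji * (((1 : A) ⊗ₜ[F] K) * (rpsi F A R ψ * (K ⊗ₜ[F] (1 : A))))

end BialgDefs

section ModuleDefs

variable (A : Type*) [Ring A] [Bialgebra F A]

/-- Right partial transpose on `End V ⊗ End W`. -/
def pt2 (V W : Type*) [AddCommGroup V] [Module F V] [AddCommGroup W] [Module F W] :
    (Module.End F V ⊗[F] Module.End F W) →ₗ[F]
      (Module.End F V ⊗[F] Module.End F (Module.Dual F W)) :=
  TensorProduct.map LinearMap.id (Module.Dual.transpose (R := F) (M := W) (M' := W))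

/-- Identification `End V ⊗ End (W^∨∨) ≃ End V ⊗ End W` via the canonical iso `W ≅ W^∨∨`. -/
def ddIdent (V W : Type*) [AddCommGroup V] [Module F V] [AddCommGroup W] [Module F W]
    [FiniteDimensional F W] :
    (Module.End F V ⊗[F] Module.End F (Module.Dual F (Module.Dual F W))) →ₗ[F]
      (Module.End F V ⊗[F] Module.End F W) :=
  TensorProduct.map LinearMap.id ((Module.evalEquiv F W).conj.symm).toLinearMap

/-- The right partial trace `A ⊗ End V → A`. -/
def trace2 (V : Type*) [AddCommGroup V] [Module F V] :
    (A ⊗[F] Module.End F V) →ₗ[F] A :=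
  (TensorProduct.rid F A).toLinearMap.comp
    (TensorProduct.map LinearMap.id (LinearMap.trace F V))

/-- `T_{•,V}`: act with the second leg on `V`. -/
def actRight (V : Type*) [AddCommGroup V] [Module F V] (ρV : A →ₐ[F] Module.End F V) :
    (A ⊗[F] A) →ₐ[F] A ⊗[F] Module.End F V :=
  Algebra.TensorProduct.map (AlgHom.id F A) ρV

/-- The boundary transfer matrix `Tr₂(𝕂₍•,V₎)`. -/
def transfer (V : Type*) [AddCommGroup V] [Module F V] (ρV : A →ₐ[F] Module.End F V)
    (T : A ⊗[F] A) : A :=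
  trace2 F A V (actRight F A V ρV T)

/-- The module structure on `V ⊗ W` obtained from `Δ`. -/
def tensorRep (V W : Type*) [AddCommGroup V] [Module F V] [AddCommGroup W] [Module F W]
    (ρV : A →ₐ[F] Module.End F V) (ρW : A →ₐ[F] Module.End F W) :
    A →ₐ[F] Module.End F (V ⊗[F] W) :=
  (Module.endTensorEndAlgHom (R := F) (S := F) (A := F) (M := V) (N := W)).comp
    ((Algebra.TensorProduct.map ρV ρW).comp (cop F A))

/-- `g` (with inverse `gi`) is a boundary gauge transformation for the twist pair `(ψ, J)`. -/
def IsBoundaryGauge (R J : A ⊗[F] A) (ψ : A ≃ₐ[F] A) (g gi : A)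
    (hg1 : g * gi = 1) (hg2 : gi * g = 1) : Prop :=
  ∀ (V W : Type) [AddCommGroup V] [Module F V] [FiniteDimensional F V]
    [AddCommGroup W] [Module F W] [FiniteDimensional F W]
    (ρV : A →ₐ[F] Module.End F V) (ρW : A →ₐ[F] Module.End F W),
    let X := pt2 F V W
      ((Algebra.TensorProduct.map
        (ρV.comp (ψ.trans (conjEquiv F A g gi hg1 hg2)).toAlgHom) ρW) R)
    IsUnit X ∧ IsUnit (pt2 F V (Module.Dual F W) (Ring.inverse X)) ∧
      (Algebra.TensorProduct.map ρV ρW) ((g ⊗ₜ[F] g) * J * cop F A gi) =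
        ddIdent F V W (Ring.inverse (pt2 F V (Module.Dual F W) (Ring.inverse X)))

end ModuleDefs

/-!
Since `υ` commutes with `Δ`, `(υ ⊗ υ) ∘ Δ^op ∘ υ⁻¹ = Δ^op`; together with `(υ ⊗ υ)(R) = R` this
makes `(υ, J)` a twist pair as soon as `J` is a universal R-matrix with `R₂₁ = J₂₁ R J⁻¹`, which is
clear for `J = R` and `J = (R₂₁)⁻¹`. The latter is a universal R-matrix because `(Δ ⊗ id)(R₂₁)` and
`(id ⊗ Δ)(R₂₁)` are cyclic rotations of the legs of `(id ⊗ Δ)(R)` and `(Δ ⊗ id)(R)`. For a universal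
R-matrix `J` the hexagon identities turn the cocycle condition into the Yang–Baxter equation,
obtained by conjugating `(Δ ⊗ id)(J)` by `J₁₂`, and applying `ε` to a hexagon identity gives
`(ε ⊗ id)(J) = 1 = (id ⊗ ε)(J)`.
-/

section TensorLegs

variable {F A : Type*} [Field F] [Ring A] [Bialgebra F A]

lemma flipT_flipT (x : A ⊗[F] A) : flipT F A (flipT F A x) = x := by
  induction x using TensorProduct.induction_on <;> simp_all [flipT]

lemma copOp_apply (a : A) : copOp F A a = flipT F A (cop F A a) := rfl

lemma mapT_flipT (f g : A →ₐ[F] A) (x : A ⊗[F] A) :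
    mapT F A f g (flipT F A x) = flipT F A (mapT F A g f x) :=
  (Algebra.TensorProduct.comm_comp_map_apply g f x).symm

lemma mapT_copOp_symm {υ : A ≃ₐ[F] A}
    (hcm : ∀ a : A, cop F A (υ a) = mapT F A υ.toAlgHom υ.toAlgHom (cop F A a)) (a : A) :
    mapT F A υ.toAlgHom υ.toAlgHom (copOp F A (υ.symm a)) = copOp F A a := by
  rw [copOp_apply, mapT_flipT, ← hcm, AlgEquiv.apply_symm_apply, copOp_apply]

lemma counit2l_cop (a : A) : counit2l F A (cop F A a) = a := by
  have h := congrArg (TensorProduct.lid F A) (Coalgebra.rTensor_counit_comul (R := F) a)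
  rwa [TensorProduct.lid_tmul, one_smul] at h

lemma counit2r_cop (a : A) : counit2r F A (cop F A a) = a := by
  have h := congrArg (TensorProduct.rid F A) (Coalgebra.lTensor_counit_comul (R := F) a)
  rwa [TensorProduct.rid_tmul, one_smul] at h

lemma counit2l_tmul (a b : A) : counit2l F A (a ⊗ₜ b) = Bialgebra.counitAlgHom F A a • b := by
  simp [counit2l]

lemma counit2r_tmul (a b : A) : counit2r F A (a ⊗ₜ b) = Bialgebra.counitAlgHom F A b • a := by
  simp [counit2r]

lemma cop12_tmul (a b : A) :
    cop12 F A (a ⊗ₜ b) = Algebra.TensorProduct.assoc F F F A A A (cop F A a ⊗ₜ b) :=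
  rfl

lemma i12_eq_assoc (x : A ⊗[F] A) :
    i12 F A x = Algebra.TensorProduct.assoc F F F A A A (x ⊗ₜ 1) := by
  induction x using TensorProduct.induction_on <;> simp_all [i12, TensorProduct.add_tmul]

lemma leftComm_i13 (x : A ⊗[F] A) :
    Algebra.TensorProduct.leftComm F A A A (i13 F A x) = i23 F A x := by
  induction x using TensorProduct.induction_on <;> simp_all [i13, i23, TensorProduct.tmul_add]

lemma leftComm_i23 (x : A ⊗[F] A) :
    Algebra.TensorProduct.leftComm F A A A (i23 F A x) = i13 F A x := by
  induction x using TensorProduct.induction_on <;> simp_all [i13, i23, TensorProduct.tmul_add]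

lemma leftComm_assoc_tmul (y : A ⊗[F] A) (b : A) :
    Algebra.TensorProduct.leftComm F A A A (Algebra.TensorProduct.assoc F F F A A A (y ⊗ₜ b)) =
      Algebra.TensorProduct.assoc F F F A A A (flipT F A y ⊗ₜ b) := by
  induction y using TensorProduct.induction_on <;> simp_all [flipT, TensorProduct.add_tmul]

def rotLegs : A ⊗[F] (A ⊗[F] A) ≃ₐ[F] A ⊗[F] (A ⊗[F] A) :=
  (Algebra.TensorProduct.comm F A (A ⊗[F] A)).trans (Algebra.TensorProduct.assoc F F F A A A)

lemma rotLegs_i12 (x : A ⊗[F] A) : rotLegs (i12 F A x) = i13 F A (flipT F A x) := by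
  induction x using TensorProduct.induction_on <;> simp_all [rotLegs, i12, i13, flipT]

lemma rotLegs_i13 (x : A ⊗[F] A) : rotLegs (i13 F A x) = i23 F A (flipT F A x) := by
  induction x using TensorProduct.induction_on <;>
    simp_all [rotLegs, i13, i23, flipT, TensorProduct.tmul_add]

lemma rotLegs_symm_i13 (x : A ⊗[F] A) : rotLegs.symm (i13 F A x) = i12 F A (flipT F A x) := by
  rw [AlgEquiv.symm_apply_eq, rotLegs_i12, flipT_flipT]

lemma rotLegs_symm_i23 (x : A ⊗[F] A) : rotLegs.symm (i23 F A x) = i13 F A (flipT F A x) := by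
  rw [AlgEquiv.symm_apply_eq, rotLegs_i13, flipT_flipT]

lemma cop12_flipT (x : A ⊗[F] A) : cop12 F A (flipT F A x) = rotLegs (cop23 F A x) := by
  induction x using TensorProduct.induction_on <;> simp_all [rotLegs, cop12, cop23, flipT]

lemma cop23_flipT (x : A ⊗[F] A) : cop23 F A (flipT F A x) = rotLegs.symm (cop12 F A x) := by
  rw [AlgEquiv.eq_symm_apply, ← cop12_flipT, flipT_flipT]

def counitLeg1 : A ⊗[F] (A ⊗[F] A) →ₐ[F] A ⊗[F] A :=
  (Algebra.TensorProduct.lid F (A ⊗[F] A)).toAlgHom.comp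
    (Algebra.TensorProduct.map (Bialgebra.counitAlgHom F A) (AlgHom.id F _))

def counitLeg3 : A ⊗[F] (A ⊗[F] A) →ₐ[F] A ⊗[F] A :=
  Algebra.TensorProduct.map (AlgHom.id F A) (counit2r F A)

lemma counitLeg1_assoc_tmul (y : A ⊗[F] A) (b : A) :
    counitLeg1 (Algebra.TensorProduct.assoc F F F A A A (y ⊗ₜ b)) = counit2l F A y ⊗ₜ b := by
  induction y using TensorProduct.induction_on <;>
    simp_all [counitLeg1, counit2l_tmul, TensorProduct.add_tmul, TensorProduct.smul_tmul]

lemma counitLeg1_cop12 (x : A ⊗[F] A) : counitLeg1 (cop12 F A x) = x := by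
  induction x using TensorProduct.induction_on <;>
    simp_all [cop12, counitLeg1_assoc_tmul, counit2l_cop]

lemma counitLeg1_i13 (x : A ⊗[F] A) : counitLeg1 (i13 F A x) = 1 ⊗ₜ counit2l F A x := by
  induction x using TensorProduct.induction_on <;>
    simp_all [counitLeg1, i13, counit2l_tmul, TensorProduct.tmul_add, TensorProduct.tmul_smul]

lemma counitLeg1_i23 (x : A ⊗[F] A) : counitLeg1 (i23 F A x) = x := by
  simp [counitLeg1, i23]

lemma counitLeg3_cop23 (x : A ⊗[F] A) : counitLeg3 (cop23 F A x) = x := by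
  induction x using TensorProduct.induction_on <;> simp_all [counitLeg3, cop23, counit2r_cop]

lemma counitLeg3_i13 (x : A ⊗[F] A) : counitLeg3 (i13 F A x) = counit2r F A x ⊗ₜ 1 := by
  induction x using TensorProduct.induction_on <;>
    simp_all [counitLeg3, i13, counit2r_tmul, TensorProduct.add_tmul, TensorProduct.smul_tmul]

lemma counitLeg3_i12 (x : A ⊗[F] A) : counitLeg3 (i12 F A x) = x := by
  induction x using TensorProduct.induction_on <;> simp_all [counitLeg3, i12, counit2r_tmul]

end TensorLegs

theorem inverse_eq_mul_rev {M : Type*} [Monoid M] {w w' u u' v v' : M} (hw : w' * w = 1)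
    (hu : u * u' = 1) (hv : v * v' = 1) (h : w = u * v) : w' = v' * u' :=
  left_inv_eq_right_inv hw (by rw [h, mul_assoc, ← mul_assoc v, hv, one_mul, hu])

namespace IsQT

variable {F A : Type*} [Field F] [Ring A] [Bialgebra F A] {R Ri : A ⊗[F] A}

lemma isUnit (h : IsQT F A R Ri) : IsUnit R := ⟨⟨R, Ri, h.mulInv, h.invMul⟩, rfl⟩

theorem counit2l_eq_one (h : IsQT F A R Ri) : counit2l F A R = 1 := by
  have hR : (1 ⊗ₜ counit2l F A R) * R = R := by
    simpa only [counitLeg1_cop12, map_mul, counitLeg1_i13, counitLeg1_i23] using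
      (congrArg counitLeg1 h.copL).symm
  simpa [counit2l_tmul] using congrArg (counit2l F A) (h.isUnit.mul_eq_right.1 hR)

theorem counit2r_eq_one (h : IsQT F A R Ri) : counit2r F A R = 1 := by
  have hR : (counit2r F A R ⊗ₜ 1) * R = R := by
    simpa only [counitLeg3_cop23, map_mul, counitLeg3_i13, counitLeg3_i12] using
      (congrArg counitLeg3 h.copR).symm
  simpa [counit2r_tmul] using congrArg (counit2r F A) (h.isUnit.mul_eq_right.1 hR)

theorem conj_cop12 (h : IsQT F A R Ri) (x : A ⊗[F] A) :
    i12 F A R * cop12 F A x * i12 F A Ri = Algebra.TensorProduct.leftComm F A A A (cop12 F A x) := by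
  induction x using TensorProduct.induction_on with
  | zero => simp
  | tmul b a =>
    rw [cop12_tmul, i12_eq_assoc, i12_eq_assoc, ← map_mul, ← map_mul,
      Algebra.TensorProduct.tmul_mul_tmul, Algebra.TensorProduct.tmul_mul_tmul, one_mul,
      mul_one, h.intw, copOp_apply, leftComm_assoc_tmul]
  | add x y hx hy => rw [map_add, mul_add, add_mul, hx, hy, map_add]

theorem yangBaxter (h : IsQT F A R Ri) :
    i12 F A R * (i13 F A R * i23 F A R) = i23 F A R * (i13 F A R * i12 F A R) :=
  calc i12 F A R * (i13 F A R * i23 F A R)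
      = i12 F A R * cop12 F A R * i12 F A Ri * i12 F A R := by
        rw [mul_assoc _ (i12 F A Ri), map_mul_eq_one _ h.invMul, mul_one, h.copL]
    _ = i23 F A R * (i13 F A R * i12 F A R) := by
        rw [h.conj_cop12, h.copL, map_mul, leftComm_i13, leftComm_i23, mul_assoc]

theorem flipT_inv (h : IsQT F A R Ri) : IsQT F A (flipT F A Ri) (flipT F A R) := by
  have hl (f : A ⊗[F] A →ₐ[F] A ⊗[F] (A ⊗[F] A)) : f (flipT F A Ri) * f (flipT F A R) = 1 :=
    map_mul_eq_one f (map_mul_eq_one _ h.invMul)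
  have hr (f : A ⊗[F] A →ₐ[F] A ⊗[F] (A ⊗[F] A)) : f (flipT F A R) * f (flipT F A Ri) = 1 :=
    map_mul_eq_one f (map_mul_eq_one _ h.mulInv)
  have hcop (a : A) : Ri * copOp F A a * R = cop F A a := by
    rw [← h.intw]
    simp only [← mul_assoc, h.invMul, one_mul]
    rw [mul_assoc, h.invMul, mul_one]
  refine ⟨map_mul_eq_one _ h.invMul, map_mul_eq_one _ h.mulInv, fun a => ?_, ?_, ?_⟩
  · simpa only [map_mul, copOp_apply, flipT_flipT] using congrArg (flipT F A) (hcop a)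
  · exact inverse_eq_mul_rev (hl _) (hr _) (hr _)
      (by rw [cop12_flipT, h.copR, map_mul, rotLegs_i13, rotLegs_i12])
  · exact inverse_eq_mul_rev (hl _) (hr _) (hr _)
      (by rw [cop23_flipT, h.copL, map_mul, rotLegs_symm_i13, rotLegs_symm_i23])

theorem isTwistPair {J Ji : A ⊗[F] A} (hJ : IsQT F A J Ji) {υ : A ≃ₐ[F] A}
    (hcm : ∀ a : A, cop F A (υ a) = mapT F A υ.toAlgHom υ.toAlgHom (cop F A a))
    (hrel : flipT F A (mapT F A υ.toAlgHom υ.toAlgHom R) = flipT F A J * R * Ji) :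
    IsTwistPair F A R Ri J Ji υ where
  mulInv := hJ.mulInv
  invMul := hJ.invMul
  cocycle := by rw [hJ.copL, hJ.copR]; exact hJ.yangBaxter
  counitL := hJ.counit2l_eq_one
  counitR := hJ.counit2r_eq_one
  intw a := by rw [hJ.intw, mapT_copOp_symm hcm]
  rrel := hrel

end IsQT

theorem statement19_general {F A : Type*} [Field F] [Ring A] [Bialgebra F A]
    (R Ri : A ⊗[F] A) (hQT : IsQT F A R Ri)
    (υ : A ≃ₐ[F] A)
    (hcm : ∀ a : A, cop F A (υ a) = mapT F A υ.toAlgHom υ.toAlgHom (cop F A a))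
    (hR : mapT F A υ.toAlgHom υ.toAlgHom R = R) :
    IsTwistPair F A R Ri R Ri υ ∧
    IsTwistPair F A R Ri (flipT F A Ri) (flipT F A R) υ :=
  ⟨hQT.isTwistPair hcm (by rw [hR, mul_assoc, hQT.mulInv, mul_one]),
    hQT.flipT_inv.isTwistPair hcm (by rw [hR, flipT_flipT, hQT.invMul, one_mul])⟩

/-- an automorphism of quasitriangular bialgebras `υ` gives the twist
pairs `(υ, R)` and `(υ, (R₂₁)⁻¹)`. -/
theorem statement19 {F A : Type*} [Field F] [Ring A] [Bialgebra F A]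
    (R Ri : A ⊗[F] A) (hQT : IsQT F A R Ri)
    (υ : A ≃ₐ[F] A)
    (hcm : ∀ a : A, cop F A (υ a) = mapT F A υ.toAlgHom υ.toAlgHom (cop F A a))
    (hce : ∀ a : A, Bialgebra.counitAlgHom F A (υ a) = Bialgebra.counitAlgHom F A a)
    (hR : mapT F A υ.toAlgHom υ.toAlgHom R = R) :
    IsTwistPair F A R Ri R Ri υ ∧
    IsTwistPair F A R Ri (flipT F A Ri) (flipT F A R) υ :=
  statement19_general R Ri hQT υ hcm hR
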